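/- arXiv:2502.04242 — 6 statements merged into one kernel-verified Lean document; each statement's English description precedes it below -/
import Mathlib

section
/- Let X be a finite nonempty set and let p be a probability mass function on X with p(x) > 0 for all x ∈ X. Let Δ = {q : X → ℝ : q(x) ≥ 0 for all x, Σ_{x∈X} q(x) = 1} denote the probability simplex, viewed as a subset of the Euclidean space ℝ^X. Then the remainder q ↦ D(q‖p) − (1/2)·Σ_{x∈X} (q(x)−p(x))²/p(x) is o(‖q−p‖²) as q → p within Δ; that is, for every ε > 0 there exists δ > 0 such that every q ∈ Δ with ‖q−p‖ < δ satisfies |D(q‖p) − (1/2)·Σ_{x∈X} (q(x)−p(x))²/p(x)| ≤ ε·‖q−p‖². -/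
open Finset

/-- Kullback–Leibler divergence between two functions on a finite type,
with the convention `0 * log 0 = 0` (automatic since `0 * x = 0` in `ℝ`). -/
noncomputable def klDiv {X : Type*} [Fintype X] (p q : X → ℝ) : ℝ :=
  ∑ x, p x * Real.log (p x / q x)

/-!
Since `∑ q = ∑ p`, the linear terms `q x - p x` sum to zero, so the remainder is the sum over `x`
of `b log (b / a) - (b - a) - (b - a)² / (2a)` with `a = p x`, `b = q x`. Writing `b = a (1 + u)`,
this is `a ((1 + u) log (1 + u) - u - u² / 2) = O(u³)` by the Taylor bound for `log (1 + u)`.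
Each coordinate is dominated by the Euclidean norm, so the sum is `O(‖q - p‖³) = o(‖q - p‖²)`.
-/

open Real Filter Topology Asymptotics

lemma abs_one_add_mul_log_one_add_sub_le {u : ℝ} (hu : |u| ≤ 1 / 2) :
    |(1 + u) * log (1 + u) - u - u ^ 2 / 2| ≤ 4 * |u| ^ 3 := by
  set E := log (1 + u) - u + u ^ 2 / 2
  have hE : |E| ≤ 2 * |u| ^ 3 := by
    have h := abs_log_sub_add_sum_range_le (x := -u) (by rw [abs_neg]; linarith) 2
    simp only [sum_range_succ, sum_range_zero, abs_neg, sub_neg_eq_add] at h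
    calc |E| = _ := congrArg abs (by push_cast; ring)
      _ ≤ |u| ^ (2 + 1) / (1 - |u|) := h
      _ ≤ |u| ^ 3 / (1 / 2) := by gcongr; linarith
      _ = 2 * |u| ^ 3 := by ring
  have h1u : |1 + u| ≤ 3 / 2 := by rw [abs_le] at hu ⊢; constructor <;> linarith
  calc |(1 + u) * log (1 + u) - u - u ^ 2 / 2| = |(1 + u) * E - u ^ 3 / 2| := by
        congr 1; simp only [E]; ring
    _ ≤ |1 + u| * |E| + |u| ^ 3 / 2 := by
      refine (abs_sub _ _).trans_eq ?_
      rw [abs_mul, abs_div, abs_pow, abs_two]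
    _ ≤ 3 / 2 * (2 * |u| ^ 3) + |u| ^ 3 / 2 := by gcongr
    _ ≤ 4 * |u| ^ 3 := by nlinarith [pow_nonneg (abs_nonneg u) 3]

noncomputable def klRemainder (a b : ℝ) : ℝ :=
  b * log (b / a) - (b - a) - (b - a) ^ 2 / (2 * a)

lemma klRemainder_eq_mul {a b : ℝ} (ha : a ≠ 0) :
    klRemainder a b =
      a * ((1 + (b - a) / a) * log (1 + (b - a) / a) - (b - a) / a - ((b - a) / a) ^ 2 / 2) := by
  have hba : 1 + (b - a) / a = b / a := by field_simp; ring
  rw [hba, klRemainder]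
  field_simp

lemma abs_klRemainder_le {a b : ℝ} (ha : 0 < a) (hab : |b - a| ≤ a / 2) :
    |klRemainder a b| ≤ 4 / a ^ 2 * |b - a| ^ 3 := by
  have hu : |(b - a) / a| ≤ 1 / 2 := by
    rw [abs_div, abs_of_pos ha, div_le_iff₀ ha]; linarith
  rw [klRemainder_eq_mul ha.ne', abs_mul, abs_of_pos ha]
  calc a * |_| ≤ a * (4 * |(b - a) / a| ^ 3) := by
        gcongr; exact abs_one_add_mul_log_one_add_sub_le hu
    _ = 4 / a ^ 2 * |b - a| ^ 3 := by
        rw [abs_div, abs_of_pos ha]; field_simp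

lemma klRemainder_isLittleO {a : ℝ} (ha : 0 < a) :
    klRemainder a =o[𝓝 a] fun b => ‖b - a‖ ^ 2 := by
  have hbig : klRemainder a =O[𝓝 a] fun b => ‖b - a‖ ^ 3 := by
    refine .of_bound (4 / a ^ 2) ?_
    filter_upwards [Metric.closedBall_mem_nhds a (half_pos ha)] with b hb
    rw [Metric.mem_closedBall, Real.dist_eq] at hb
    simpa only [Real.norm_eq_abs, abs_pow, abs_abs] using abs_klRemainder_le ha hb
  exact hbig.trans_isLittleO (isLittleO_pow_sub_pow_sub a (by norm_num))

lemma isLittleO_sum_klRemainder {X : Type*} [Fintype X] (p : EuclideanSpace ℝ X)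
    (hp : ∀ x, 0 < p x) :
    (fun q : EuclideanSpace ℝ X => ∑ x, klRemainder (p x) (q x)) =o[𝓝 p]
      fun q => ‖q - p‖ ^ 2 := by
  refine IsLittleO.fun_sum fun x _ => ?_
  have hcoord : Tendsto (fun q : EuclideanSpace ℝ X => q x) (𝓝 p) (𝓝 (p x)) :=
    (PiLp.continuous_apply 2 _ x).tendsto p
  refine ((klRemainder_isLittleO (hp x)).comp_tendsto hcoord).trans_isBigO ?_
  refine .of_bound' (.of_forall fun q => ?_)
  simp only [Function.comp_apply, norm_pow, norm_norm]
  gcongr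
  simpa using PiLp.norm_apply_le (q - p) x

lemma klDiv_sub_eq_sum_klRemainder {X : Type*} [Fintype X] {p q : X → ℝ}
    (h : ∑ x, q x = ∑ x, p x) :
    klDiv q p - 1 / 2 * ∑ x, (q x - p x) ^ 2 / p x = ∑ x, klRemainder (p x) (q x) := by
  have hdiff : ∑ x, (q x - p x) = 0 := by rw [sum_sub_distrib, h, sub_self]
  simp only [klDiv, klRemainder, sum_sub_distrib, hdiff, mul_sum]
  congr 1
  · ring
  · exact sum_congr rfl fun x _ => by ring

theorem stmt_5_general {X : Type*} [Fintype X]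
    (p : EuclideanSpace ℝ X) (hppos : ∀ x, 0 < p x) (hpsum : ∑ x, p x = 1) :
    ∀ ε > (0 : ℝ), ∃ δ > (0 : ℝ), ∀ q : EuclideanSpace ℝ X,
      (∀ x, 0 ≤ q x) → (∑ x, q x = 1) → ‖q - p‖ < δ →
      |klDiv q p - (1 / 2) * ∑ x, (q x - p x) ^ 2 / p x| ≤ ε * ‖q - p‖ ^ 2 := by
  intro ε hε
  obtain ⟨δ, hδ, hball⟩ :=
    Metric.eventually_nhds_iff.1 ((isLittleO_sum_klRemainder p hppos).def hε)
  refine ⟨δ, hδ, fun q _ hqsum hqp => ?_⟩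
  rw [klDiv_sub_eq_sum_klRemainder (by rw [hqsum, hpsum])]
  simpa only [Real.norm_eq_abs, norm_pow, abs_norm] using hball (by rwa [dist_eq_norm])

/-- Second-order expansion of the K-L divergence `D(q‖p)` in its first
argument: the remainder `D(q‖p) − (1/2)·Σ (q(x)−p(x))²/p(x)` is `o(‖q−p‖²)`
as `q → p` within the probability simplex, where `‖·‖` is the Euclidean norm
on `ℝ^X`. -/
theorem stmt_5 {X : Type*} [Fintype X] [Nonempty X]
    (p : EuclideanSpace ℝ X) (hppos : ∀ x, 0 < p x) (hpsum : ∑ x, p x = 1) :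
    ∀ ε > (0 : ℝ), ∃ δ > (0 : ℝ), ∀ q : EuclideanSpace ℝ X,
      (∀ x, 0 ≤ q x) → (∑ x, q x = 1) → ‖q - p‖ < δ →
      |klDiv q p - (1 / 2) * ∑ x, (q x - p x) ^ 2 / p x| ≤ ε * ‖q - p‖ ^ 2 :=
  stmt_5_general p hppos hpsum
end

section
/- Let N₀ > 0, N₁ > 0, and t ≥ 0 be real numbers, and define f(n) = 1/(N₀+n) + t·n²/(N₀+n)² for n ∈ [0, N₁]. Define n* = N₁ if N₀·t ≤ 1/2, and n* = min(N₁, N₀/(2·N₀·t − 1)) if N₀·t > 1/2. Then n* is the unique minimizer of f on [0, N₁]: f(n*) ≤ f(n) for all n ∈ [0, N₁], with equality only when n = n*. -/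
/-- Optimal transfer quantity for the single-source error measure
`f(n) = 1/(N₀+n) + t·n²/(N₀+n)²` on `[0, N₁]`: the point
`n* = N₁` if `N₀·t ≤ 1/2`, and `n* = min(N₁, N₀/(2N₀t−1))` otherwise,
is the unique minimizer of `f` on `[0, N₁]`. -/
theorem stmt_8 (N₀ N₁ t : ℝ) (hN₀ : 0 < N₀) (hN₁ : 0 < N₁) (ht : 0 ≤ t)
    (f : ℝ → ℝ) (hf : ∀ n, f n = 1 / (N₀ + n) + t * n ^ 2 / (N₀ + n) ^ 2)
    (nstar : ℝ)
    (hstar : nstar =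
      if N₀ * t ≤ 1 / 2 then N₁ else min N₁ (N₀ / (2 * N₀ * t - 1))) :
    nstar ∈ Set.Icc (0 : ℝ) N₁ ∧
    ∀ n ∈ Set.Icc (0 : ℝ) N₁, f nstar ≤ f n ∧ (f nstar = f n → n = nstar) := by
  have hpos : ∀ n : ℝ, 0 ≤ n → (0:ℝ) < N₀ + n := fun n hn => by linarith
  have key : ∀ n m : ℝ, 0 ≤ n → 0 ≤ m →
      (f n - f m) * ((N₀ + n) ^ 2 * (N₀ + m) ^ 2)
        = (m - n) * (t * N₀ ^ 2 * (2 * N₀ + n + m)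
            + (1 - 2 * N₀ * t) * ((N₀ + n) * (N₀ + m))) := by
    intro n m hn hm
    have h1 : N₀ + n ≠ 0 := (hpos n hn).ne'
    have h2 : N₀ + m ≠ 0 := (hpos m hm).ne'
    rw [hf, hf]
    field_simp
    ring
  -- bounds on nstar, and the main sign facts
  have hmem : 0 ≤ nstar ∧ nstar ≤ N₁ := by
    rw [hstar]
    split_ifs with h
    · exact ⟨hN₁.le, le_rfl⟩
    · have hs : 0 < 2 * N₀ * t - 1 := by nlinarith
      constructor
      · exact le_min hN₁.le (div_nonneg hN₀.le hs.le)
      · exact min_le_left _ _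
  obtain ⟨hm0, hm1⟩ := hmem
  have main : ∀ n, 0 ≤ n → n ≤ N₁ →
      0 ≤ (f n - f nstar) * ((N₀ + n) ^ 2 * (N₀ + nstar) ^ 2) ∧
      ((f n - f nstar) * ((N₀ + n) ^ 2 * (N₀ + nstar) ^ 2) = 0 → n = nstar) := by
    intro n hn0 hn1
    rw [key n nstar hn0 hm0]
    rcases le_or_gt (N₀ * t) (1/2) with h | h
    · -- nstar = N₁
      have hm : nstar = N₁ := by rw [hstar, if_pos h]
      rw [hm]
      have hc : 0 ≤ 1 - 2 * N₀ * t := by linarith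
      have hQ : 0 < t * N₀ ^ 2 * (2 * N₀ + n + N₁)
          + (1 - 2 * N₀ * t) * ((N₀ + n) * (N₀ + N₁)) := by
        nlinarith [mul_nonneg ht (by positivity : (0:ℝ) ≤ N₀ ^ 2 * (n + N₁)),
          mul_nonneg hc (by positivity : (0:ℝ) ≤ N₀ * (n + N₁) + n * N₁)]
      refine ⟨mul_nonneg (by linarith) hQ.le, fun h0 => ?_⟩
      rcases mul_eq_zero.mp h0 with h0 | h0
      · linarith
      · exact absurd h0 hQ.ne'
    · have hs : 0 < 2 * N₀ * t - 1 := by linarith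
      have ht' : 0 < t := by nlinarith
      have hm : nstar = min N₁ (N₀ / (2 * N₀ * t - 1)) := by
        rw [hstar, if_neg (not_le.mpr h)]
      rcases le_or_gt (N₀ / (2 * N₀ * t - 1)) N₁ with h2 | h2
      · -- interior vertex case: nstar = N₀/(2N₀t-1)
        have hm' : nstar = N₀ / (2 * N₀ * t - 1) := by rw [hm, min_eq_right h2]
        have hsm : (2 * N₀ * t - 1) * nstar = N₀ := by
          rw [hm']; field_simp
        have hQ : t * N₀ ^ 2 * (2 * N₀ + n + nstar)
            + (1 - 2 * N₀ * t) * ((N₀ + n) * (N₀ + nstar))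
            = t * N₀ ^ 2 * (nstar - n) := by nlinarith [hsm]
        rw [hQ]
        constructor
        · nlinarith [mul_nonneg (mul_nonneg ht'.le (sq_nonneg N₀)) (sq_nonneg (nstar - n))]
        · intro h0
          have : (nstar - n) ^ 2 = 0 := by
            have htN : (0:ℝ) < t * N₀ ^ 2 := by positivity
            nlinarith
          have := pow_eq_zero_iff (n := 2) (by norm_num) |>.mp this
          linarith
      · -- boundary case: nstar = N₁ < N₀/(2N₀t-1)
        have hm' : nstar = N₁ := by rw [hm, min_eq_left h2.le]
        rw [hm']
        have hsN : (2 * N₀ * t - 1) * N₁ < N₀ := by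
          rw [lt_div_iff₀ hs] at h2; linarith
        have hQ : 0 < t * N₀ ^ 2 * (2 * N₀ + n + N₁)
            + (1 - 2 * N₀ * t) * ((N₀ + n) * (N₀ + N₁)) := by
          nlinarith [mul_pos (by linarith : (0:ℝ) < N₀ - (2 * N₀ * t - 1) * N₁)
              (hpos n hn0),
            mul_nonneg (mul_nonneg (by positivity : (0:ℝ) ≤ 2 * N₀ * t) (sq_nonneg N₀))
              (by linarith : (0:ℝ) ≤ N₁ - n),
            mul_nonneg (by positivity : (0:ℝ) ≤ 2 * N₀ * t * N₀) (by linarith : (0:ℝ) ≤ N₁ - n)]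
        refine ⟨mul_nonneg (by linarith) hQ.le, fun h0 => ?_⟩
        rcases mul_eq_zero.mp h0 with h0 | h0
        · linarith
        · exact absurd h0 hQ.ne'
  refine ⟨⟨hm0, hm1⟩, fun n hn => ?_⟩
  obtain ⟨hn0, hn1⟩ := hn
  obtain ⟨hE, hEq⟩ := main n hn0 hn1
  have hD : (0:ℝ) < (N₀ + n) ^ 2 * (N₀ + nstar) ^ 2 := by
    have := hpos n hn0; have := hpos nstar hm0; positivity
  constructor
  · nlinarith
  · intro hfe
    exact hEq (by rw [hfe]; ring)
end

section
/- Let N₀ > 0 and t ≥ 0 be real numbers with N₀·t ≤ 1/2, and define f(n) = 1/(N₀+n) + t·n²/(N₀+n)² for n ≥ 0. Then f is strictly decreasing on [0,∞): for all 0 ≤ n < n′, f(n′) < f(n). Consequently, for every N₁ > 0 the unique minimizer of f on [0, N₁] is n = N₁. -/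
/-- Case 1 (`N₀·t ≤ 1/2`) of the single-source theorem: the error measure
`f(n) = 1/(N₀+n) + t·n²/(N₀+n)²` is strictly decreasing on `[0,∞)`, so for
every `N₁ > 0` the unique minimizer of `f` on `[0, N₁]` is `n = N₁`. -/
theorem stmt_9 (N₀ t : ℝ) (hN₀ : 0 < N₀) (ht : 0 ≤ t) (hcase : N₀ * t ≤ 1 / 2)
    (f : ℝ → ℝ) (hf : ∀ n, f n = 1 / (N₀ + n) + t * n ^ 2 / (N₀ + n) ^ 2) :
    (∀ n n' : ℝ, 0 ≤ n → n < n' → f n' < f n) ∧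
    ∀ N₁ : ℝ, 0 < N₁ →
      ∀ n ∈ Set.Icc (0 : ℝ) N₁, f N₁ ≤ f n ∧ (f N₁ = f n → n = N₁) := by
  have hmono : ∀ n n' : ℝ, 0 ≤ n → n < n' → f n' < f n := by
    intro n n' hn hlt
    have ha : 0 < N₀ + n := by linarith
    have hb : 0 < N₀ + n' := by linarith
    rw [hf, hf, ← sub_pos]
    have key : 0 < (N₀ + n) * (N₀ + n') - N₀ * t * (2 * (N₀ + n) * (N₀ + n') - N₀ * ((N₀ + n) + (N₀ + n'))) := by
      rcases eq_or_lt_of_le ht with h | h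
      · subst h; nlinarith [mul_pos ha hb]
      · nlinarith [mul_pos ha hb, mul_pos (mul_pos h (mul_pos hN₀ hN₀)) (add_pos ha hb)]
    have expand : (1 / (N₀ + n) + t * n ^ 2 / (N₀ + n) ^ 2) - (1 / (N₀ + n') + t * n' ^ 2 / (N₀ + n') ^ 2)
        = (n' - n) * ((N₀ + n) * (N₀ + n') - N₀ * t * (2 * (N₀ + n) * (N₀ + n') - N₀ * ((N₀ + n) + (N₀ + n')))) / ((N₀ + n) ^ 2 * (N₀ + n') ^ 2) := by
      field_simp
      ring
    rw [expand]
    apply div_pos (mul_pos (by linarith) key)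
    positivity
  refine ⟨hmono, fun N₁ hN₁ n hn => ?_⟩
  obtain ⟨hn0, hnN⟩ := hn
  rcases eq_or_lt_of_le hnN with h | h
  · subst h; exact ⟨le_refl _, fun _ => rfl⟩
  · exact ⟨(hmono n N₁ hn0 h).le, fun heq => absurd heq (ne_of_lt (hmono n N₁ hn0 h))⟩
end

section
/- Let N₀ > 0 and t ≥ 0 be real numbers with N₀·t > 1/2, set n′ = N₀/(2·N₀·t − 1), and define f(n) = 1/(N₀+n) + t·n²/(N₀+n)² for n ≥ 0. Then f is strictly decreasing on [0, n′] and strictly increasing on [n′, ∞); in particular, n′ is the unique global minimizer of f on [0,∞). -/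
/-- Case 2 (`N₀·t > 1/2`) of the single-source theorem: the error measure
`f(n) = 1/(N₀+n) + t·n²/(N₀+n)²` is strictly decreasing on `[0, n′]` and
strictly increasing on `[n′, ∞)` with `n′ = N₀/(2N₀t−1)`; in particular `n′`
is the unique global minimizer of `f` on `[0,∞)`. -/

theorem stmt_10 (N₀ t : ℝ) (hN₀ : 0 < N₀) (ht : 0 ≤ t) (hcase : 1 / 2 < N₀ * t)
    (n' : ℝ) (hn' : n' = N₀ / (2 * N₀ * t - 1))
    (f : ℝ → ℝ) (hf : ∀ n, f n = 1 / (N₀ + n) + t * n ^ 2 / (N₀ + n) ^ 2) :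
    StrictAntiOn f (Set.Icc 0 n') ∧ StrictMonoOn f (Set.Ici n') ∧
    ∀ n : ℝ, 0 ≤ n → f n' ≤ f n ∧ (f n' = f n → n = n') := by
  obtain ⟨s, hs_def⟩ : ∃ s : ℝ, s = 2 * N₀ * t - 1 := ⟨_, rfl⟩
  rw [← hs_def] at hn'
  have hs : 0 < s := by rw [hs_def]; linarith
  have ht' : 0 < t := by nlinarith
  have hn'0 : 0 ≤ n' := by rw [hn']; positivity
  have key : ∀ n m : ℝ, 0 ≤ n → n < m →
      ((N₀ + m) ^ 2 * (N₀ + n) ^ 2) * (f n - f m)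
        = (m - n) * (t * N₀ ^ 2 * ((N₀ + n) + (N₀ + m)) - s * (N₀ + n) * (N₀ + m)) := by
    intro n m hn hnm
    have ha : (0:ℝ) < N₀ + n := by linarith
    have hb : (0:ℝ) < N₀ + m := by linarith
    rw [hf, hf, hs_def]
    field_simp
    ring
  have anti : ∀ n m : ℝ, 0 ≤ n → n < m → m ≤ n' → f m < f n := by
    intro n m hn hnm hm
    have ha : (0:ℝ) < N₀ + n := by linarith
    have hb : (0:ℝ) < N₀ + m := by linarith
    have hms : m * s ≤ N₀ := by
      rw [hn'] at hm
      exact (le_div_iff₀ hs).mp hm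
    have hbs : s * (N₀ + m) ≤ N₀ * (s + 1) := by nlinarith
    have has : s * (N₀ + n) < N₀ * (s + 1) := by nlinarith
    have hkey : 0 < t * N₀ ^ 2 * ((N₀ + n) + (N₀ + m)) - s * (N₀ + n) * (N₀ + m) := by
      have h1 : s * (N₀ + n) * (N₀ + m) < N₀ * (s + 1) * (N₀ + m) := by nlinarith
      have h2 : s * (N₀ + m) * (N₀ + n) ≤ N₀ * (s + 1) * (N₀ + n) := by nlinarith
      have he : t * N₀ ^ 2 = N₀ * (s + 1) / 2 := by rw [hs_def]; ring
      rw [he]; nlinarith [h1, h2]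
    have hP : 0 < ((N₀ + m) ^ 2 * (N₀ + n) ^ 2) * (f n - f m) := by
      rw [key n m hn hnm]
      exact mul_pos (by linarith) hkey
    have hD : (0:ℝ) < (N₀ + m) ^ 2 * (N₀ + n) ^ 2 := by positivity
    rcases mul_pos_iff.mp hP with ⟨_, h⟩ | ⟨h, _⟩
    · linarith
    · linarith
  have mono : ∀ n m : ℝ, n' ≤ n → n < m → f n < f m := by
    intro n m hn hnm
    have hn0 : 0 ≤ n := le_trans hn'0 hn
    have ha : (0:ℝ) < N₀ + n := by linarith
    have hb : (0:ℝ) < N₀ + m := by linarith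
    have hns : N₀ ≤ n * s := by
      rw [hn'] at hn
      exact (div_le_iff₀ hs).mp hn
    have has : N₀ * (s + 1) ≤ s * (N₀ + n) := by nlinarith
    have hbs : N₀ * (s + 1) < s * (N₀ + m) := by nlinarith
    have hkey : t * N₀ ^ 2 * ((N₀ + n) + (N₀ + m)) - s * (N₀ + n) * (N₀ + m) < 0 := by
      have h1 : N₀ * (s + 1) * (N₀ + m) ≤ s * (N₀ + n) * (N₀ + m) := by nlinarith
      have h2 : N₀ * (s + 1) * (N₀ + n) < s * (N₀ + m) * (N₀ + n) := by nlinarith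
      have he : t * N₀ ^ 2 = N₀ * (s + 1) / 2 := by rw [hs_def]; ring
      rw [he]; nlinarith [h1, h2]
    have hP : ((N₀ + m) ^ 2 * (N₀ + n) ^ 2) * (f n - f m) < 0 := by
      rw [key n m hn0 hnm]
      exact mul_neg_of_pos_of_neg (by linarith) hkey
    have hD : (0:ℝ) < (N₀ + m) ^ 2 * (N₀ + n) ^ 2 := by positivity
    rcases mul_neg_iff.mp hP with ⟨_, h⟩ | ⟨h, _⟩
    · linarith
    · linarith
  refine ⟨?_, ?_, ?_⟩
  · intro a ha b hb hab
    exact anti a b ha.1 hab hb.2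
  · intro a ha b hb hab
    exact mono a b ha hab
  · intro n hn
    rcases lt_trichotomy n n' with h | h | h
    · have := anti n n' hn h le_rfl
      exact ⟨by linarith, fun he => by linarith⟩
    · exact ⟨le_of_eq (by rw [h]), fun _ => h⟩
    · have := mono n' n le_rfl h
      exact ⟨le_of_lt this, fun he => absurd he (by linarith)⟩
end

section
/- Let N₀ > 0 and t ≥ 0 be real numbers with N₀·t > 1/2, and define f(n) = 1/(N₀+n) + t·n²/(N₀+n)² for n ≥ 0. Then at the interior optimum n′ = N₀/(2·N₀·t − 1), the minimum value is f(n′) = 1/N₀ − 1/(4·t·N₀²). In particular f(n′) < 1/N₀ = f(0), so transferring n′ source samples strictly reduces the dominant error term compared to using the target samples alone. -/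
/-! In the variable `u = 1/(N₀+n)` one has `f(n) = u + t(1 - N₀u)²`, a quadratic in `u` with leading
coefficient `tN₀²`. Completing the square gives
`f(n) = 1/N₀ - 1/(4tN₀²) + tN₀²(u - u*)²` with `u* = (2N₀t-1)/(2N₀²t)`, and `n′` is exactly the sample
size with `1/(N₀+n′) = u*`. -/

noncomputable section

def transferError (N₀ t n : ℝ) : ℝ :=
  1 / (N₀ + n) + t * n ^ 2 / (N₀ + n) ^ 2

def optimalInvSampleSize (N₀ t : ℝ) : ℝ :=
  (2 * N₀ * t - 1) / (2 * N₀ ^ 2 * t)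

theorem transferError_eq_min_add_sq {N₀ t n : ℝ} (hN₀ : N₀ ≠ 0) (ht : t ≠ 0) (hs : N₀ + n ≠ 0) :
    transferError N₀ t n =
      1 / N₀ - 1 / (4 * t * N₀ ^ 2) + t * N₀ ^ 2 * ((N₀ + n)⁻¹ - optimalInvSampleSize N₀ t) ^ 2 := by
  unfold transferError optimalInvSampleSize
  field_simp
  ring

theorem transferError_zero (N₀ t : ℝ) : transferError N₀ t 0 = 1 / N₀ := by
  simp [transferError]

theorem add_optimalSampleSize {N₀ t : ℝ} (hd : 2 * N₀ * t - 1 ≠ 0) :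
    N₀ + N₀ / (2 * N₀ * t - 1) = (optimalInvSampleSize N₀ t)⁻¹ := by
  rw [optimalInvSampleSize, inv_div, eq_div_iff hd, add_mul, div_mul_cancel₀ _ hd]
  ring

theorem transferError_optimalSampleSize {N₀ t : ℝ} (hN₀ : N₀ ≠ 0) (ht : t ≠ 0)
    (hd : 2 * N₀ * t - 1 ≠ 0) :
    transferError N₀ t (N₀ / (2 * N₀ * t - 1)) = 1 / N₀ - 1 / (4 * t * N₀ ^ 2) := by
  have hu : optimalInvSampleSize N₀ t ≠ 0 := by
    unfold optimalInvSampleSize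
    positivity
  rw [transferError_eq_min_add_sq hN₀ ht (by rw [add_optimalSampleSize hd]; exact inv_ne_zero hu),
    add_optimalSampleSize hd, inv_inv, sub_self]
  ring

theorem stmt_11_general (N₀ t : ℝ) (hN₀ : 0 < N₀) (hcase : 1 / 2 < N₀ * t)
    (n' : ℝ) (hn' : n' = N₀ / (2 * N₀ * t - 1))
    (f : ℝ → ℝ) (hf : ∀ n, f n = 1 / (N₀ + n) + t * n ^ 2 / (N₀ + n) ^ 2) :
    f n' = 1 / N₀ - 1 / (4 * t * N₀ ^ 2) ∧ f 0 = 1 / N₀ ∧ f n' < f 0 := by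
  obtain rfl : f = transferError N₀ t := funext hf
  subst hn'
  have ht : 0 < t := pos_of_mul_pos_right (by linarith) hN₀.le
  have hd : 0 < 2 * N₀ * t - 1 := by linarith
  rw [transferError_optimalSampleSize hN₀.ne' ht.ne' hd.ne', transferError_zero]
  refine ⟨rfl, rfl, ?_⟩
  have hgain : 0 < 1 / (4 * t * N₀ ^ 2) := by positivity
  linarith

/-- Closed-form minimum value at the interior optimum `n′ = N₀/(2N₀t−1)` when
`N₀·t > 1/2`: `f(n′) = 1/N₀ − 1/(4tN₀²) < 1/N₀ = f(0)`, so transferring `n′`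
source samples strictly reduces the dominant error term compared to using the
target samples alone. -/
theorem stmt_11 (N₀ t : ℝ) (hN₀ : 0 < N₀) (ht : 0 ≤ t) (hcase : 1 / 2 < N₀ * t)
    (n' : ℝ) (hn' : n' = N₀ / (2 * N₀ * t - 1))
    (f : ℝ → ℝ) (hf : ∀ n, f n = 1 / (N₀ + n) + t * n ^ 2 / (N₀ + n) ^ 2) :
    f n' = 1 / N₀ - 1 / (4 * t * N₀ ^ 2) ∧ f 0 = 1 / N₀ ∧ f n' < f 0 :=
  stmt_11_general N₀ t hN₀ hcase n' hn' f hf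

end
end

section
/- Let N₀ > 0, N₁ > 0, and t ≥ 0 be real numbers, and define f(n) = 1/(N₀+n) + t·n²/(N₀+n)² for n ∈ [0, N₁]. Then there exists n ∈ (0, N₁] with f(n) < f(0) = 1/N₀; that is, regardless of how large the task-discrepancy parameter t is, transferring some strictly positive quantity of source samples strictly decreases the dominant error term relative to training on the target samples alone. -/
/-- Regardless of the task-discrepancy parameter `t ≥ 0`, there exists a
strictly positive transfer quantity `n ∈ (0, N₁]` with
`f(n) < f(0) = 1/N₀`, for `f(n) = 1/(N₀+n) + t·n²/(N₀+n)²`. -/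
theorem stmt_12 (N₀ N₁ t : ℝ) (hN₀ : 0 < N₀) (hN₁ : 0 < N₁) (ht : 0 ≤ t)
    (f : ℝ → ℝ) (hf : ∀ n, f n = 1 / (N₀ + n) + t * n ^ 2 / (N₀ + n) ^ 2) :
    f 0 = 1 / N₀ ∧ ∃ n : ℝ, 0 < n ∧ n ≤ N₁ ∧ f n < f 0 := by
  have hf0 : f 0 = 1 / N₀ := by rw [hf]; simp
  refine ⟨hf0, ?_⟩
  set n := min N₁ (N₀ / (t * N₀ + 1)) with hn
  have hden : 0 < t * N₀ + 1 := by positivity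
  have hnpos : 0 < n := lt_min hN₁ (by positivity)
  have hle : n ≤ N₀ / (t * N₀ + 1) := min_le_right _ _
  have hkey : n * (t * N₀ + 1) ≤ N₀ := by
    rw [← le_div_iff₀ hden]; exact hle
  have h1 : 0 < N₀ + n := by linarith
  have hkey2 : t * n * N₀ < N₀ + n := by nlinarith
  refine ⟨n, hnpos, min_le_left _ _, ?_⟩
  rw [hf, hf0]
  rw [div_add_div _ _ (ne_of_gt h1) (by positivity), div_lt_div_iff₀ (by positivity) hN₀]
  nlinarith [sq_nonneg n, mul_pos h1 hnpos, mul_pos (mul_pos h1 hnpos) hnpos,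
    mul_lt_mul_of_pos_left hkey2 (mul_pos hnpos hN₀)]
end
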